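/- Let 𝒢 = (G₂ →∂ G₁) be a crossed module and (A, ω₁, ω₂, ω₃) a trivially graded N-weak 𝒢-algebra. With H₁ := Aˣ × G₁ and H₂ := Aˣ × G₂ equipped with the twisted products (a,g)·(b,h) := (a·ω₁(g)(b)·ω₃(g,h)⁻¹, gh) and (a,x)·(b,y) := (a·(ω₂(x) b ω₂(x)⁻¹)·ω₃(∂x,∂y)⁻¹, xy), with ∂̂(a,x) := (a, ∂x), and with the action ^{(a,g)}(b,x) := ( a·ω₁(g)(b)·ω₃(g,∂x)⁻¹·ω₁(g·∂x)(ω₃(g⁻¹,g))·ω₃(g·∂x,g⁻¹)⁻¹·(ω₂(ᵍx)·a⁻¹·ω₂(ᵍx)⁻¹), ᵍx ), the two crossed-module axioms hold: (i) ∂̂(^{η}ζ) = η · ∂̂(ζ) · η⁻¹ in H₁ for all η ∈ H₁ and ζ ∈ H₂, and (ii) the Peiffer identity ^{∂̂(ζ)}ζ' = ζ · ζ' · ζ⁻¹ in H₂ for all ζ, ζ' ∈ H₂. Hence ℋ = (H₂ →∂̂ H₁) is a crossed module. -/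
import Mathlib


/-- The twisted product on `Aˣ × G₁`. -/
def H1mul {G₁ A : Type*} [Group G₁] [Ring A]
    (ω₁ : G₁ → A ≃+* A) (ω₃ : G₁ → G₁ → Aˣ) (p q : Aˣ × G₁) : Aˣ × G₁ :=
  (p.1 * Units.map (ω₁ p.2).toRingHom.toMonoidHom q.1 * (ω₃ p.2 q.2)⁻¹, p.2 * q.2)

/-- The inverse for the twisted product on `Aˣ × G₁`. -/
def H1inv {G₁ A : Type*} [Group G₁] [Ring A]
    (ω₁ : G₁ → A ≃+* A) (ω₃ : G₁ → G₁ → Aˣ) (p : Aˣ × G₁) : Aˣ × G₁ :=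
  (ω₃ p.2⁻¹ p.2 * Units.map (ω₁ p.2⁻¹).toRingHom.toMonoidHom p.1⁻¹, p.2⁻¹)

/-- The twisted product on `Aˣ × G₂`. -/
def H2mul {G₁ G₂ A : Type*} [Group G₁] [Group G₂] [Ring A]
    (d : G₂ →* G₁) (ω₂ : G₂ → Aˣ) (ω₃ : G₁ → G₁ → Aˣ) (p q : Aˣ × G₂) : Aˣ × G₂ :=
  (p.1 * (ω₂ p.2 * q.1 * (ω₂ p.2)⁻¹) * (ω₃ (d p.2) (d q.2))⁻¹, p.2 * q.2)

/-- The inverse for the twisted product on `Aˣ × G₂`. -/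
def H2inv {G₁ G₂ A : Type*} [Group G₁] [Group G₂] [Ring A]
    (d : G₂ →* G₁) (ω₂ : G₂ → Aˣ) (ω₃ : G₁ → G₁ → Aˣ) (p : Aˣ × G₂) : Aˣ × G₂ :=
  (ω₃ (d p.2⁻¹) (d p.2) * (ω₂ p.2⁻¹ * p.1⁻¹ * (ω₂ p.2⁻¹)⁻¹), p.2⁻¹)

/-- The action of `H₁ = Aˣ × G₁` on `H₂ = Aˣ × G₂`. -/
def actH {G₁ G₂ A : Type*} [Group G₁] [Group G₂] [Ring A]
    (act : G₁ →* MulAut G₂) (d : G₂ →* G₁) (ω₁ : G₁ → A ≃+* A)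
    (ω₂ : G₂ → Aˣ) (ω₃ : G₁ → G₁ → Aˣ) (p : Aˣ × G₁) (q : Aˣ × G₂) : Aˣ × G₂ :=
  (p.1 * Units.map (ω₁ p.2).toRingHom.toMonoidHom q.1 * (ω₃ p.2 (d q.2))⁻¹
      * Units.map (ω₁ (p.2 * d q.2)).toRingHom.toMonoidHom (ω₃ p.2⁻¹ p.2)
      * (ω₃ (p.2 * d q.2) p.2⁻¹)⁻¹
      * (ω₂ (act p.2 q.2) * p.1⁻¹ * (ω₂ (act p.2 q.2))⁻¹),
    act p.2 q.2)

/-- For a trivially graded N-weak `𝒢`-algebra, the data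
`ℋ = (H₂ →∂̂ H₁)` with `∂̂(a,x) := (a, ∂x)` and the action `actH` satisfies the two
crossed-module axioms: `∂̂(^η ζ) = η·∂̂(ζ)·η⁻¹` and the Peiffer identity
`^{∂̂(ζ)}ζ' = ζ·ζ'·ζ⁻¹`. -/
theorem stmt_11 {G₁ G₂ A : Type*} [Group G₁] [Group G₂] [Ring A]
    (act : G₁ →* MulAut G₂) (d : G₂ →* G₁)
    (hdact : ∀ (g : G₁) (x : G₂), d (act g x) = g * d x * g⁻¹)
    (hPeiffer : ∀ y x : G₂, act (d y) x = y * x * y⁻¹)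
    (ω₁ : G₁ → A ≃+* A) (hω₁e : ω₁ 1 = RingEquiv.refl A)
    (ω₂ : G₂ → Aˣ) (hω₂e : ω₂ 1 = 1)
    (ω₃ : G₁ → G₁ → Aˣ)
    (hω₃l : ∀ g : G₁, ω₃ 1 g = 1) (hω₃r : ∀ g : G₁, ω₃ g 1 = 1)
    (hax1 : ∀ (g₂ g₁ : G₁) (a : A),
      ω₁ (g₂ * g₁) a = (ω₃ g₂ g₁ : A) * ω₁ g₂ (ω₁ g₁ a) * (((ω₃ g₂ g₁)⁻¹ : Aˣ) : A))
    (hax2 : ∀ x₂ x₁ : G₂, ω₂ (x₂ * x₁) = ω₃ (d x₂) (d x₁) * ω₂ x₂ * ω₂ x₁)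
    (hax3 : ∀ (x : G₂) (a : A),
      ω₁ (d x) a = (ω₂ x : A) * a * (((ω₂ x)⁻¹ : Aˣ) : A))
    (hax4 : ∀ g₃ g₂ g₁ : G₁,
      (ω₃ (g₃ * g₂) g₁ : A) * (ω₃ g₃ g₂ : A)
        = (ω₃ g₃ (g₂ * g₁) : A) * ω₁ g₃ ((ω₃ g₂ g₁ : Aˣ) : A))
    (hax5 : ∀ (g : G₁) (x : G₂),
      (ω₂ (act g x) : A)
        = (ω₃ (g * d x) g⁻¹ : A) * (ω₃ g (d x) : A) * ω₁ g ((ω₂ x : Aˣ) : A)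
          * (((ω₃ g g⁻¹)⁻¹ : Aˣ) : A)) :
    (∀ (η : Aˣ × G₁) (ζ : Aˣ × G₂),
      (((actH act d ω₁ ω₂ ω₃ η ζ).1, d (actH act d ω₁ ω₂ ω₃ η ζ).2) : Aˣ × G₁)
        = H1mul ω₁ ω₃ (H1mul ω₁ ω₃ η (ζ.1, d ζ.2)) (H1inv ω₁ ω₃ η)) ∧
    (∀ ζ ζ' : Aˣ × G₂,
      actH act d ω₁ ω₂ ω₃ (ζ.1, d ζ.2) ζ'
        = H2mul d ω₂ ω₃ (H2mul d ω₂ ω₃ ζ ζ') (H2inv d ω₂ ω₃ ζ)) := by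
  have u1 : ∀ (g₂ g₁ : G₁) (u : Aˣ),
      Units.map (ω₁ (g₂ * g₁)).toRingHom.toMonoidHom u
        = ω₃ g₂ g₁ * Units.map (ω₁ g₂).toRingHom.toMonoidHom
            (Units.map (ω₁ g₁).toRingHom.toMonoidHom u) * (ω₃ g₂ g₁)⁻¹ := by
    intro g₂ g₁ u
    ext
    simpa using hax1 g₂ g₁ u
  have u3 : ∀ (x : G₂) (u : Aˣ),
      Units.map (ω₁ (d x)).toRingHom.toMonoidHom u = ω₂ x * u * (ω₂ x)⁻¹ := by
    intro x u
    ext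
    simpa using hax3 x u
  constructor
  · rintro ⟨a, g⟩ ⟨b, x⟩
    have hd : d (act g x) = g * d x * g⁻¹ := hdact g x
    refine Prod.ext ?_ ?_
    · simp only [actH, H1mul, H1inv]
      have key : Units.map (ω₁ (g * d x)).toRingHom.toMonoidHom
          (Units.map (ω₁ g⁻¹).toRingHom.toMonoidHom a⁻¹)
          = (ω₃ (g * d x) g⁻¹)⁻¹ * (ω₂ (act g x) * a⁻¹ * (ω₂ (act g x))⁻¹)
              * ω₃ (g * d x) g⁻¹ := by
        have h := u1 (g * d x) g⁻¹ a⁻¹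
        rw [← hd, u3 (act g x)] at h
        rw [h]
        group
      rw [map_mul, key]
      group
    · simpa [actH, H1mul, H1inv] using hd
  · rintro ⟨a, y⟩ ⟨b, x⟩
    refine Prod.ext ?_ ?_
    · simp only [actH, H2mul, H2inv]
      rw [hPeiffer, u3 y b, hax2 (y * x) y⁻¹]
      have hmul : (d y : G₁) * d x = d (y * x) := (map_mul d y x).symm
      rw [hmul, u3 (y * x)]
      simp only [map_inv, map_mul]
      group
    · simpa [actH, H2mul, H2inv] using hPeiffer y x
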